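/- arXiv:1305.1246 — 2 statements merged into one kernel-verified Lean document; each statement's English description precedes it below -/
import Mathlib

section
/- In the q = 1 case (commutative), the 2×6 matrix Ψ whose columns are ψ/√(1−t²p₁₁) and φ/√(1−t²p₁₁) (with ψ, φ as in the classical instanton frame and p₁₁ = |z₁|²) satisfies Ψ†Ψ = 1₂, hence P := ΨΨ† is a projection: P² = P and P† = P. -/
/-!
Both ψ and φ have squared norm `cos² 2θ |z₁|² + (cos² θ + sin² θ)(|z₂|² + |z₃|²) = 1 − sin² 2θ |z₁|²`
(by `∑ |zᵢ|² = 1` and `sin² + cos² = 1` at `θ` and `2θ`), and the cross terms of `⟨ψ, φ⟩` cancel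
in pairs. So `Ψ` has orthonormal columns, `Ψ†Ψ = 1`, and then `ΨΨ†` is an orthogonal projection.
-/

open Matrix ComplexConjugate

section
variable {m n 𝕜 : Type*} [Fintype m] [RCLike 𝕜]

theorem Matrix.mul_mul_self_of_mul_eq_one {α : Type*} [Semiring α] [Fintype n] [DecidableEq n]
    {A : Matrix m n α} {B : Matrix n m α} (h : B * A = 1) :
    (A * B) * (A * B) = A * B := by
  rw [Matrix.mul_assoc, ← Matrix.mul_assoc B, h, Matrix.one_mul]

theorem star_div_sqrt_dotProduct (x y : m → 𝕜) {r : ℝ} (hr : 0 ≤ r) :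
    (star fun i => x i / (√r : 𝕜)) ⬝ᵥ (fun i => y i / (√r : 𝕜)) = (star x ⬝ᵥ y) / r := by
  have hsq : (√r : 𝕜) * (√r : 𝕜) = r := by
    rw [← RCLike.ofReal_mul, Real.mul_self_sqrt hr]
  simp only [dotProduct, Pi.star_apply, Finset.sum_div, star_div₀, RCLike.star_def,
    RCLike.conj_ofReal, ← hsq]
  refine Finset.sum_congr rfl fun i _ => ?_
  rw [div_mul_div_comm]

theorem Matrix.conjTranspose_mul_self_eq_one_of_orthogonal (u v : m → 𝕜) {r : ℝ} (hr : 0 < r)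
    (hu : star u ⬝ᵥ u = r) (hv : star v ⬝ᵥ v = r) (huv : star u ⬝ᵥ v = 0)
    (Ψ : Matrix m (Fin 2) 𝕜)
    (hΨ : ∀ i, Ψ i 0 = u i / (√r : 𝕜) ∧ Ψ i 1 = v i / (√r : 𝕜)) :
    Ψᴴ * Ψ = 1 := by
  have hvu : star v ⬝ᵥ u = 0 := by rw [star_dotProduct, huv, star_zero]
  have hr' : (r : 𝕜) ≠ 0 := by exact_mod_cast hr.ne'
  have hcol : (fun i => Ψ i 0) = (fun i => u i / (√r : 𝕜)) ∧
      (fun i => Ψ i 1) = (fun i => v i / (√r : 𝕜)) :=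
    ⟨funext fun i => (hΨ i).1, funext fun i => (hΨ i).2⟩
  ext a b
  change (star fun i => Ψ i a) ⬝ᵥ (fun i => Ψ i b) = _
  fin_cases a <;> fin_cases b <;>
    simp [hcol.1, hcol.2, star_div_sqrt_dotProduct _ _ hr.le, hu, hv, huv, hvu, hr']
end

noncomputable def instantonPsi (θ : ℝ) (z : Fin 3 → ℂ) : Fin 6 → ℂ :=
  ![(Real.cos (2 * θ) : ℂ) * star (z 0), (Real.cos θ : ℂ) * star (z 1),
    (Real.cos θ : ℂ) * star (z 2), 0, (Real.sin θ : ℂ) * star (z 2),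
    (Real.sin θ : ℂ) * star (z 1)]

noncomputable def instantonPhi (θ : ℝ) (z : Fin 3 → ℂ) : Fin 6 → ℂ :=
  ![0, -(Real.sin θ : ℂ) * z 2, (Real.sin θ : ℂ) * z 1, (Real.cos (2 * θ) : ℂ) * z 0,
    (Real.cos θ : ℂ) * z 1, -(Real.cos θ : ℂ) * z 2]

section
variable (θ : ℝ) {z : Fin 3 → ℂ}

theorem star_instantonPsi_dotProduct_instantonPhi (z : Fin 3 → ℂ) :
    star (instantonPsi θ z) ⬝ᵥ instantonPhi θ z = 0 := by
  simp only [instantonPsi, instantonPhi, dotProduct, Fin.sum_univ_six, Pi.star_apply, cons_val,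
    Complex.star_def, map_mul, map_zero, Complex.conj_conj, Complex.conj_ofReal]
  ring

theorem instanton_normSq_identity (hz : ∑ i, ‖z i‖ ^ 2 = 1) :
    (Real.cos (2 * θ) : ℂ) ^ 2 * (conj (z 0) * z 0) +
        ((Real.cos θ : ℂ) ^ 2 + (Real.sin θ : ℂ) ^ 2) * (conj (z 1) * z 1 + conj (z 2) * z 2) =
      ((1 - Real.sin (2 * θ) ^ 2 * ‖z 0‖ ^ 2 : ℝ) : ℂ) := by
  have hz' : conj (z 0) * z 0 + conj (z 1) * z 1 + conj (z 2) * z 2 = 1 := by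
    simp only [Complex.conj_mul']
    exact_mod_cast (Fin.sum_univ_three _).symm.trans hz
  have h1 : (Real.sin θ : ℂ) ^ 2 + (Real.cos θ : ℂ) ^ 2 = 1 := by
    exact_mod_cast Real.sin_sq_add_cos_sq θ
  have h2 : (Real.sin (2 * θ) : ℂ) ^ 2 + (Real.cos (2 * θ) : ℂ) ^ 2 = 1 := by
    exact_mod_cast Real.sin_sq_add_cos_sq (2 * θ)
  rw [Complex.ofReal_sub, Complex.ofReal_one, Complex.ofReal_mul, Complex.ofReal_pow,
    Complex.ofReal_pow, ← Complex.conj_mul']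
  linear_combination conj (z 0) * z 0 * h2 + (conj (z 1) * z 1 + conj (z 2) * z 2) * h1
    + hz'

theorem star_instantonPsi_dotProduct_self (hz : ∑ i, ‖z i‖ ^ 2 = 1) :
    star (instantonPsi θ z) ⬝ᵥ instantonPsi θ z =
      ((1 - Real.sin (2 * θ) ^ 2 * ‖z 0‖ ^ 2 : ℝ) : ℂ) := by
  rw [← instanton_normSq_identity θ hz]
  simp only [instantonPsi, dotProduct, Fin.sum_univ_six, Pi.star_apply, cons_val,
    Complex.star_def, map_mul, map_zero, Complex.conj_conj, Complex.conj_ofReal]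
  ring

theorem star_instantonPhi_dotProduct_self (hz : ∑ i, ‖z i‖ ^ 2 = 1) :
    star (instantonPhi θ z) ⬝ᵥ instantonPhi θ z =
      ((1 - Real.sin (2 * θ) ^ 2 * ‖z 0‖ ^ 2 : ℝ) : ℂ) := by
  rw [← instanton_normSq_identity θ hz]
  simp only [instantonPhi, dotProduct, Fin.sum_univ_six, Pi.star_apply, cons_val,
    Complex.star_def, map_mul, map_neg, map_zero, Complex.conj_ofReal]
  ring
end

open Matrix in
theorem stmt_7_general (θ : ℝ)
    (t : ℝ) (ht : t = Real.sin (2 * θ))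
    (z : Fin 3 → ℂ) (hz : ∑ i, ‖z i‖ ^ 2 = 1)
    (hden : t ^ 2 * ‖z 0‖ ^ 2 < 1)
    (ψ φ : Fin 6 → ℂ)
    (hψ : ψ = ![(Real.cos (2 * θ) : ℂ) * star (z 0),
                (Real.cos θ : ℂ) * star (z 1),
                (Real.cos θ : ℂ) * star (z 2),
                0,
                (Real.sin θ : ℂ) * star (z 2),
                (Real.sin θ : ℂ) * star (z 1)])
    (hφ : φ = ![0,
                -(Real.sin θ : ℂ) * z 2,
                (Real.sin θ : ℂ) * z 1,
                (Real.cos (2 * θ) : ℂ) * z 0,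
                (Real.cos θ : ℂ) * z 1,
                -(Real.cos θ : ℂ) * z 2])
    (Ψ : Matrix (Fin 6) (Fin 2) ℂ)
    (hΨ : ∀ i : Fin 6,
      Ψ i 0 = ψ i / (Real.sqrt (1 - t ^ 2 * ‖z 0‖ ^ 2) : ℂ) ∧
      Ψ i 1 = φ i / (Real.sqrt (1 - t ^ 2 * ‖z 0‖ ^ 2) : ℂ)) :
    Ψᴴ * Ψ = 1 ∧ (Ψ * Ψᴴ) * (Ψ * Ψᴴ) = Ψ * Ψᴴ ∧ (Ψ * Ψᴴ)ᴴ = Ψ * Ψᴴ := by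
  subst ht hψ hφ
  have hΨΨ : Ψᴴ * Ψ = 1 :=
    conjTranspose_mul_self_eq_one_of_orthogonal (instantonPsi θ z) (instantonPhi θ z)
      (sub_pos.mpr hden) (star_instantonPsi_dotProduct_self θ hz)
      (star_instantonPhi_dotProduct_self θ hz) (star_instantonPsi_dotProduct_instantonPhi θ z)
      Ψ hΨ
  exact ⟨hΨΨ, mul_mul_self_of_mul_eq_one hΨΨ, isHermitian_mul_conjTranspose_self Ψ⟩

open Matrix in
/-- The 6×2 matrix `Ψ` with columns `ψ/√(1−t²|z₁|²)` and `φ/√(1−t²|z₁|²)` satisfies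
`Ψ†Ψ = 1₂`, hence `P := ΨΨ†` is a projection: `P² = P` and `P† = P`. -/
theorem stmt_7 (θ : ℝ) (hθ0 : 0 ≤ θ) (hθ1 : θ < Real.pi / 4)
    (t : ℝ) (ht : t = Real.sin (2 * θ))
    (z : Fin 3 → ℂ) (hz : ∑ i, ‖z i‖ ^ 2 = 1)
    (hden : t ^ 2 * ‖z 0‖ ^ 2 < 1)
    (ψ φ : Fin 6 → ℂ)
    (hψ : ψ = ![(Real.cos (2 * θ) : ℂ) * star (z 0),
                (Real.cos θ : ℂ) * star (z 1),
                (Real.cos θ : ℂ) * star (z 2),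
                0,
                (Real.sin θ : ℂ) * star (z 2),
                (Real.sin θ : ℂ) * star (z 1)])
    (hφ : φ = ![0,
                -(Real.sin θ : ℂ) * z 2,
                (Real.sin θ : ℂ) * z 1,
                (Real.cos (2 * θ) : ℂ) * z 0,
                (Real.cos θ : ℂ) * z 1,
                -(Real.cos θ : ℂ) * z 2])
    (Ψ : Matrix (Fin 6) (Fin 2) ℂ)
    (hΨ : ∀ i : Fin 6,
      Ψ i 0 = ψ i / (Real.sqrt (1 - t ^ 2 * ‖z 0‖ ^ 2) : ℂ) ∧
      Ψ i 1 = φ i / (Real.sqrt (1 - t ^ 2 * ‖z 0‖ ^ 2) : ℂ)) :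
    Ψᴴ * Ψ = 1 ∧ (Ψ * Ψᴴ) * (Ψ * Ψᴴ) = Ψ * Ψᴴ ∧ (Ψ * Ψᴴ)ᴴ = Ψ * Ψᴴ :=
  stmt_7_general θ t ht z hz hden ψ φ hψ hφ Ψ hΨ
end

section
/- For a smooth function f : (0, ∞) → ℝ given by a convergent power series f(x) = ∑ cₙxⁿ, and an element x of a ring with y·x = q²·x·y, the q-derivative rule holds: ∂f(x) := ∑ cₙ ∂(xⁿ) satisfies ∂f(x) = Ḟ(qx)·∂x = ∂x·Ḟ(q⁻¹x), where Ḟ(x) := (f(qx) − f(q⁻¹x))/((q−q⁻¹)x) applied as a power series. In particular for polynomials f, the two-sided identity ∑ₙ cₙ [n]_q (qx)^{n−1} ∂x = ∂x · ∑ₙ cₙ [n]_q (q⁻¹x)^{n−1} holds in any algebra where (∂x)·x = q²·x·(∂x). -/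
/-!
Since `∂x · x = q² x · ∂x`, every `∂x` can be pushed through a power of `x`, at the cost of a
power of `q²`. The Leibniz rule then collects `∂(xⁿ)` into
`(1 + q² + ⋯ + q^{2(n-1)}) xⁿ⁻¹ ∂x`, and this geometric sum is `[n]_q qⁿ⁻¹`. Pushing `∂x` to
the left instead uses `x · ∂x = q⁻² ∂x · x` and gives the same with `q⁻¹`, because
`[n]_{q⁻¹} = [n]_q`.
-/

open Finset

section LeibnizPow

variable {R A : Type*} [CommSemiring R] [Semiring A] [Algebra R A] {D : A → A}
  (hleib : ∀ a b, D (a * b) = D a * b + a * D b) {x : A}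
include hleib

theorem apply_pow_succ_eq_geom_sum_smul_pow_mul {r : R} (hx : D x * x = r • (x * D x))
    (n : ℕ) : D (x ^ (n + 1)) = (∑ i ∈ range (n + 1), r ^ i) • (x ^ n * D x) := by
  induction n with
  | zero => simp
  | succ n ih =>
    rw [pow_succ, hleib, ih, geom_sum_succ (n := n + 1), smul_mul_assoc, mul_assoc, hx,
      mul_smul_comm, smul_smul, ← mul_assoc, ← pow_succ, add_smul, one_smul, mul_comm]

theorem apply_pow_succ_eq_geom_sum_smul_mul_pow {s : R} (hx : x * D x = s • (D x * x))
    (n : ℕ) : D (x ^ (n + 1)) = (∑ i ∈ range (n + 1), s ^ i) • (D x * x ^ n) := by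
  induction n with
  | zero => simp
  | succ n ih =>
    rw [pow_succ', hleib, ih, geom_sum_succ (n := n + 1), mul_smul_comm, ← mul_assoc, hx,
      smul_mul_assoc, smul_smul, mul_assoc, ← pow_succ', add_smul, one_smul, add_comm, mul_comm]

end LeibnizPow

theorem apply_one_eq_zero_of_leibniz {A : Type*} [NonAssocRing A] {D : A → A}
    (hleib : ∀ a b, D (a * b) = D a * b + a * D b) : D 1 = 0 := by
  simpa using hleib 1 1

section QNumber

variable {K : Type*} [Field K]

def qNumber (q : K) (n : ℕ) : K := (q ^ (n : ℤ) - q ^ (-(n : ℤ))) / (q - q⁻¹)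

@[simp] theorem qNumber_zero (q : K) : qNumber q 0 = 0 := by simp [qNumber]

theorem qNumber_inv (q : K) (n : ℕ) : qNumber q⁻¹ n = qNumber q n := by
  rw [qNumber, qNumber, inv_inv, inv_zpow', inv_zpow', neg_neg, ← neg_div_neg_eq, neg_sub,
    neg_sub]

theorem qNumber_succ_mul_pow {q : K} (hq : q - q⁻¹ ≠ 0) (n : ℕ) :
    qNumber q (n + 1) * q ^ n = ∑ i ∈ range (n + 1), (q ^ 2) ^ i := by
  have hq0 : q ≠ 0 := by rintro rfl; simp at hq
  have hq2 : q ^ 2 - 1 ≠ 0 := by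
    contrapose! hq
    field_simp
    linear_combination hq
  refine mul_right_cancel₀ hq2 ?_
  rw [geom_sum_mul, qNumber, zpow_neg, zpow_natCast]
  field_simp
  ring

end QNumber

section QDerivative

variable {K A : Type*} [Field K] [Ring A] [Algebra K A] {D : A → A}
  (hleib : ∀ a b, D (a * b) = D a * b + a * D b) {q : K} (hq : q - q⁻¹ ≠ 0) {x : A}
  (hx : D x * x = q ^ 2 • (x * D x))
include hleib hq hx

theorem apply_pow_eq_qNumber_smul_pow_mul (n : ℕ) :
    D (x ^ n) = qNumber q n • ((q • x) ^ (n - 1) * D x) := by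
  cases n with
  | zero => simp [apply_one_eq_zero_of_leibniz hleib]
  | succ m =>
    rw [apply_pow_succ_eq_geom_sum_smul_pow_mul hleib hx, ← qNumber_succ_mul_pow hq,
      Nat.add_sub_cancel, smul_pow, smul_mul_assoc, smul_smul]

theorem apply_pow_eq_mul_qNumber_smul_pow (n : ℕ) :
    D (x ^ n) = D x * (qNumber q n • (q⁻¹ • x) ^ (n - 1)) := by
  have hq0 : q ≠ 0 := by rintro rfl; simp at hq
  have hx' : x * D x = q⁻¹ ^ 2 • (D x * x) := by
    rw [hx, smul_smul, inv_pow, inv_mul_cancel₀ (pow_ne_zero 2 hq0), one_smul]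
  have hq' : q⁻¹ - q⁻¹⁻¹ ≠ 0 := by rwa [inv_inv, ← neg_sub, neg_ne_zero]
  cases n with
  | zero => simp [apply_one_eq_zero_of_leibniz hleib]
  | succ m =>
    rw [apply_pow_succ_eq_geom_sum_smul_mul_pow hleib hx', ← qNumber_succ_mul_pow hq',
      qNumber_inv, Nat.add_sub_cancel, smul_pow, smul_smul, mul_smul_comm]

end QDerivative

/-- q-derivative rule for polynomials: if `∂` is a derivation on an ℝ-algebra and
`(∂x)·x = q²·x·(∂x)`, then for any polynomial `f = ∑ cₙ xⁿ`,
`∂f(x) = ∑ₙ cₙ[n]_q (qx)^(n−1)·∂x = ∂x · ∑ₙ cₙ[n]_q (q⁻¹x)^(n−1)`. -/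
theorem stmt_13 {A : Type*} [Ring A] [Algebra ℝ A]
    (q : ℝ) (hq0 : 0 < q) (hq1 : q < 1)
    (D : A →ₗ[ℝ] A) (hleib : ∀ a b : A, D (a * b) = D a * b + a * D b)
    (x : A) (hx : D x * x = (q ^ 2) • (x * D x))
    (f : Polynomial ℝ) :
    D (Polynomial.aeval x f) =
      ∑ n ∈ Finset.range (f.natDegree + 1),
        (f.coeff n * ((q ^ (n : ℤ) - q ^ (-(n : ℤ))) / (q - q⁻¹))) •
          ((q • x) ^ (n - 1) * D x) ∧
    D (Polynomial.aeval x f) =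
      D x * ∑ n ∈ Finset.range (f.natDegree + 1),
        (f.coeff n * ((q ^ (n : ℤ) - q ^ (-(n : ℤ))) / (q - q⁻¹))) •
          (q⁻¹ • x) ^ (n - 1) := by
  have hq : q - q⁻¹ ≠ 0 := sub_ne_zero.mpr (hq1.trans ((one_lt_inv₀ hq0).mpr hq1)).ne
  rw [Polynomial.aeval_eq_sum_range, map_sum, mul_sum]
  constructor
  · refine sum_congr rfl fun n _ => ?_
    rw [map_smul, apply_pow_eq_qNumber_smul_pow_mul hleib hq hx, smul_smul]
    rfl
  · refine sum_congr rfl fun n _ => ?_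
    rw [map_smul, apply_pow_eq_mul_qNumber_smul_pow hleib hq hx, mul_smul_comm, smul_smul,
      mul_smul_comm]
    rfl
end
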